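/- arXiv:1510.06696 — 9 statements merged into one kernel-verified Lean document; each statement's English description precedes it below -/
import Mathlib

section
/- For any integer n > 1, if n = p^i for some prime p and integer i > 0, then the greatest common divisor of the binomial coefficients C(n,1), C(n,2), ..., C(n,n-1) equals p. -/
/-!
Every `C(p^i, k)` with `0 < k < p^i` is divisible by `p`, so `p` divides the gcd, while the gcd
divides `C(p^i, 1) = p^i` and hence is a power of `p`. By Kummer's theorem `C(p^i, p^(i-1))` has
`p`-adic valuation exactly `1`, so that power is `p` itself.
-/

open Finset

theorem Nat.Prime.not_sq_dvd_choose_pow_succ_pow {p : ℕ} (hp : p.Prime) (i : ℕ) :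
    ¬ p ^ 2 ∣ (p ^ (i + 1)).choose (p ^ i) := by
  rw [← emultiplicity_lt_iff_not_dvd, hp.emultiplicity_choose_prime_pow
    (Nat.pow_le_pow_right hp.pos i.le_succ) (pow_ne_zero i hp.ne_zero),
    multiplicity_pow_self_of_prime hp.prime]
  norm_num

theorem Nat.Prime.gcd_choose_prime_pow {p i : ℕ} (hp : p.Prime) (hi : i ≠ 0) :
    (Ioo 0 (p ^ i)).gcd (fun k => (p ^ i).choose k) = p := by
  obtain ⟨i, rfl⟩ := Nat.exists_eq_succ_of_ne_zero hi
  set g := (Ioo 0 (p ^ (i + 1))).gcd (fun k => (p ^ (i + 1)).choose k)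
  have hp_dvd : p ∣ g :=
    Finset.dvd_gcd fun k hk => hp.dvd_choose_pow (mem_Ioo.1 hk).1.ne' (mem_Ioo.1 hk).2.ne
  have hdvd_pow : g ∣ p ^ (i + 1) := by
    simpa using Finset.gcd_dvd (f := fun k => (p ^ (i + 1)).choose k)
      (mem_Ioo.2 ⟨Nat.one_pos, Nat.one_lt_pow i.succ_ne_zero hp.one_lt⟩)
  have hdvd_choose : g ∣ (p ^ (i + 1)).choose (p ^ i) :=
    Finset.gcd_dvd (mem_Ioo.2 ⟨pow_pos hp.pos i, Nat.pow_lt_pow_succ hp.one_lt⟩)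
  obtain ⟨j, -, hj⟩ := (Nat.dvd_prime_pow hp).1 hdvd_pow
  rw [hj] at hp_dvd hdvd_choose ⊢
  have hj_pos : 1 ≤ j := (Nat.pow_dvd_pow_iff_le_right hp.one_lt).1 (by simpa using hp_dvd)
  have hj_lt : j < 2 := by
    by_contra! h
    exact hp.not_sq_dvd_choose_pow_succ_pow i ((pow_dvd_pow p h).trans hdvd_choose)
  rw [show j = 1 by omega, pow_one]

theorem stmt_0_general (n p i : ℕ) (hp : p.Prime) (hi : 0 < i)
    (hpow : n = p ^ i) :
    Finset.gcd (Finset.Ioo 0 n) (fun k => Nat.choose n k) = p := by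
  subst hpow
  exact hp.gcd_choose_prime_pow hi.ne'

theorem stmt_0 (n p i : ℕ) (hn : 1 < n) (hp : p.Prime) (hi : 0 < i)
    (hpow : n = p ^ i) :
    Finset.gcd (Finset.Ioo 0 n) (fun k => Nat.choose n k) = p :=
  stmt_0_general n p i hp hi hpow
end

section
/- For any integer n > 1, if n is not a prime power (i.e., n ≠ p^i for every prime p and integer i > 0), then the greatest common divisor of the binomial coefficients C(n,k) for 0 < k < n equals 1. -/
open Nat Finset

lemma key_not_dvd (p n : ℕ) (hp : p.Prime) (hn : 0 < n) :
    ¬ p ∣ Nat.choose n (p ^ (n.factorization p)) := by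
  haveI : Fact p.Prime := ⟨hp⟩
  set a := n.factorization p with ha
  set m := n / p ^ a with hm
  have hpm : ¬ p ∣ m := Nat.not_dvd_ordCompl hp hn.ne'
  have hcong := Choose.choose_modEq_choose_mul_prod_range_choose
      (n := n) (k := p ^ a) (p := p) a
  have h1 : (p : ℕ) ^ a / p ^ a = 1 := Nat.div_self (pow_pos hp.pos a)
  have h2 : ∀ i ∈ Finset.range a, Nat.choose (n / p ^ i % p) (p ^ a / p ^ i % p) = 1 := by
    intro i hi
    rw [Finset.mem_range] at hi
    have hd : p ^ a / p ^ i = p ^ (a - i) := Nat.pow_div hi.le hp.pos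
    have hz : p ^ (a - i) % p = 0 := by
      have : p ^ (a - i) = p ^ (a - i - 1) * p := by rw [← pow_succ]; congr 1; omega
      rw [this, Nat.mul_mod_left]
    rw [hd, hz, Nat.choose_zero_right]
  rw [h1, Nat.choose_one_right, Finset.prod_congr rfl h2, Finset.prod_const_one,
    Nat.cast_one, mul_one] at hcong
  intro hdvd
  have h0 : ((Nat.choose n (p ^ a) : ℤ)) ≡ 0 [ZMOD p] :=
    Int.modEq_zero_iff_dvd.mpr (Int.natCast_dvd_natCast.mpr hdvd)
  have hm0 : ((m : ℤ)) ≡ 0 [ZMOD p] := hcong.symm.trans h0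
  exact hpm (Int.natCast_dvd_natCast.mp (Int.modEq_zero_iff_dvd.mp hm0))

theorem stmt_1 (n : ℕ) (hn : 1 < n)
    (h : ∀ p i : ℕ, p.Prime → 0 < i → n ≠ p ^ i) :
    Finset.gcd (Finset.Ioo 0 n) (fun k => Nat.choose n k) = 1 := by
  by_contra hg
  set g := Finset.gcd (Finset.Ioo 0 n) (fun k => Nat.choose n k) with hgdef
  have hgn : g ∣ n := by
    have := Finset.gcd_dvd (f := fun k => Nat.choose n k)
      (Finset.mem_Ioo.mpr ⟨Nat.zero_lt_one, hn⟩)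
    simpa using this
  obtain ⟨p, hp, hpg⟩ := Nat.exists_prime_and_dvd hg
  have hpn : p ∣ n := hpg.trans hgn
  have hn0 : 0 < n := by omega
  set a := n.factorization p with ha
  have ha0 : 0 < a := (Nat.Prime.factorization_pos_of_dvd hp hn0.ne' hpn)
  have hdvd : p ^ a ∣ n := Nat.ordProj_dvd n p
  have hklt : p ^ a < n := by
    rcases lt_or_eq_of_le (Nat.le_of_dvd hn0 hdvd) with h' | h'
    · exact h'
    · exact absurd h'.symm (h p a hp ha0)
  have hkpos : 0 < p ^ a := pow_pos hp.pos a
  have hgd : g ∣ Nat.choose n (p ^ a) := by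
    have := Finset.gcd_dvd (f := fun k => Nat.choose n k)
      (Finset.mem_Ioo.mpr ⟨hkpos, hklt⟩)
    simpa using this
  exact key_not_dvd p n hp hn0 (hpg.trans hgd)
end

section
/- For any integer n > 1 and any odd prime p, the p-adic valuation of gcd over 0 < k < n of C(2n, 2k) equals 1 if 2n = p^i + p^j for some integers 0 ≤ i ≤ j, and equals 0 otherwise. -/
/-!
Write `s` for the base-`p` digit sum. Kummer's theorem gives
`(p - 1) * v_p (C(N, m)) = s m + s (N - m) - s N`, and since `p` is odd, `s m ≡ m [MOD 2]`.
Moreover `s N = 2` exactly when `N = p^i + p^j`. In that case every even `0 < m < N` has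
`s m ≥ 2` and `s (N - m) ≥ 1`, so `p` divides every term, while `m = p^i + p^(j-1)` gives valuation
exactly `1`. Otherwise `s (2n) ≥ 4`; removing two units from the digits of `2n` gives an even
`m = p^a + p^b` with `s m + s (2n - m) = s (2n)`, i.e. a term prime to `p`.
-/

namespace Nat

variable {p : ℕ}

theorem digits_sum_eq_mod_add_digits_sum_div (hp : 1 < p) (n : ℕ) :
    (p.digits n).sum = n % p + (p.digits (n / p)).sum := by
  rcases n.eq_zero_or_pos with rfl | hn
  · simp
  · rw [digits_def' hp hn, List.sum_cons]

theorem digits_sum_add_base_mul (hp : 1 < p) {q : ℕ} (hq : q < p) (z : ℕ) :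
    (p.digits (q + p * z)).sum = q + (p.digits z).sum := by
  rw [digits_sum_eq_mod_add_digits_sum_div hp, Nat.add_mul_mod_self_left, Nat.mod_eq_of_lt hq,
    Nat.add_mul_div_left _ _ (by omega), Nat.div_eq_of_lt hq, zero_add]

theorem digits_sum_of_lt (hp : 1 < p) {q : ℕ} (hq : q < p) : (p.digits q).sum = q := by
  simpa using digits_sum_add_base_mul hp hq 0

theorem digits_sum_base_pow_mul (hp : 1 < p) (a x : ℕ) :
    (p.digits (p ^ a * x)).sum = (p.digits x).sum := by
  rcases x.eq_zero_or_pos with rfl | hx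
  · simp
  · simp [digits_base_pow_mul hp hx]

theorem digits_sum_pow_add_pow (hp : 2 < p) (a b : ℕ) : (p.digits (p ^ a + p ^ b)).sum = 2 := by
  wlog hab : a ≤ b generalizing a b
  · rw [add_comm]; exact this b a (by omega)
  obtain ⟨c, rfl⟩ := Nat.exists_eq_add_of_le hab
  rw [pow_add, ← mul_one_add, digits_sum_base_pow_mul (by omega)]
  rcases c with _ | c
  · exact digits_sum_of_lt (by omega) hp
  · rw [pow_succ', digits_sum_add_base_mul (by omega) (by omega),
      ← mul_one (p ^ c), digits_sum_base_pow_mul (by omega), digits_sum_of_lt (by omega) (by omega)]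
    rfl

theorem exists_digits_sum_sub_base_pow (hp : 1 < p) {x : ℕ} (hx : x ≠ 0) :
    ∃ e, p ^ e ≤ x ∧ (p.digits (x - p ^ e)).sum + 1 = (p.digits x).sum := by
  obtain ⟨e, y, hy, rfl⟩ := exists_eq_pow_mul_and_not_dvd hx p (by omega)
  obtain ⟨q, z, hq0, hqp, rfl⟩ : ∃ q z, q ≠ 0 ∧ q < p ∧ y = q + p * z :=
    ⟨y % p, y / p, fun h => hy (dvd_of_mod_eq_zero h), mod_lt _ (by omega), (mod_add_div y p).symm⟩
  refine ⟨e, Nat.le_mul_of_pos_right _ (by omega), ?_⟩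
  have hsub : p ^ e * (q + p * z) - p ^ e = p ^ e * (q - 1 + p * z) := by
    rw [← Nat.mul_sub_one]; congr 1; omega
  rw [hsub, digits_sum_base_pow_mul hp, digits_sum_base_pow_mul hp,
    digits_sum_add_base_mul hp (by omega), digits_sum_add_base_mul hp hqp]
  omega

theorem exists_pow_add_pow_le_of_two_le_digits_sum (hp : 1 < p) {N : ℕ}
    (hN : 2 ≤ (p.digits N).sum) :
    ∃ a b, p ^ a + p ^ b ≤ N ∧ (p.digits (N - (p ^ a + p ^ b))).sum + 2 = (p.digits N).sum := by
  obtain ⟨a, ha, hsa⟩ := exists_digits_sum_sub_base_pow hp (x := N) (by rintro rfl; simp at hN)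
  obtain ⟨b, hb, hsb⟩ := exists_digits_sum_sub_base_pow hp (x := N - p ^ a)
    (by intro h; rw [h] at hsa; simp at hsa; omega)
  exact ⟨a, b, by omega, by rw [← Nat.sub_sub]; omega⟩

theorem digits_sum_eq_two_iff (hp : 2 < p) {N : ℕ} :
    (p.digits N).sum = 2 ↔ ∃ i j, i ≤ j ∧ N = p ^ i + p ^ j := by
  refine ⟨fun hN => ?_, fun ⟨i, j, _, hN⟩ => hN ▸ digits_sum_pow_add_pow hp i j⟩
  obtain ⟨a, b, hab, hs⟩ := exists_pow_add_pow_le_of_two_le_digits_sum (by omega) hN.ge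
  have hN : N = p ^ a + p ^ b := by
    have : N - (p ^ a + p ^ b) = 0 := by
      by_contra h
      obtain ⟨e, -, he⟩ := exists_digits_sum_sub_base_pow (p := p) (by omega) h
      omega
    omega
  rcases le_total a b with h | h
  · exact ⟨a, b, h, hN⟩
  · exact ⟨b, a, h, hN.trans (add_comm _ _)⟩

theorem digits_sum_mod_two (hp : Odd p) (n : ℕ) : (p.digits n).sum % 2 = n % 2 :=
  (modEq_digits_sum 2 p (odd_iff.mp hp) n).symm

end Nat

section Kummer

open Nat

variable {p : ℕ} [hp : Fact p.Prime]

theorem padicValNat_le_of_dvd {a b : ℕ} (hb : b ≠ 0) (h : a ∣ b) :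
    padicValNat p a ≤ padicValNat p b :=
  (padicValNat_dvd_iff_le hb).mp (pow_padicValNat_dvd.trans h)

theorem prime_dvd_choose_of_digits_sum_eq_two (hp2 : p ≠ 2) {N m : ℕ}
    (hN : (p.digits N).sum = 2) (hm : Even m) (hm0 : m ≠ 0) (hmN : m < N) :
    p ∣ N.choose m := by
  have hodd : Odd p := hp.out.odd_of_ne_two hp2
  have hsm : 2 ≤ (p.digits m).sum := by
    obtain ⟨e, -, he⟩ := exists_digits_sum_sub_base_pow hp.out.one_lt hm0
    have := digits_sum_mod_two hodd m
    have := even_iff.mp hm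
    omega
  obtain ⟨e, -, he⟩ := exists_digits_sum_sub_base_pow hp.out.one_lt (x := N - m) (by omega)
  have hkummer := sub_one_mul_padicValNat_choose_eq_sub_sum_digits (p := p) hmN.le
  refine dvd_of_one_le_padicValNat (Nat.pos_of_ne_zero fun h => ?_)
  rw [h, mul_zero] at hkummer
  omega

theorem padicValNat_choose_pow_add_pow_succ (hp2 : p ≠ 2) (i j : ℕ) :
    padicValNat p ((p ^ i + p ^ (j + 1)).choose (p ^ i + p ^ j)) = 1 := by
  have hp1 := hp.out.one_lt
  have hp3 : 2 < p := lt_of_le_of_ne hp.out.two_le (Ne.symm hp2)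
  have hpow : p ^ j ≤ p ^ (j + 1) := Nat.pow_le_pow_right (by omega) (by omega)
  have hdiff : p ^ i + p ^ (j + 1) - (p ^ i + p ^ j) = p ^ j * (p - 1) := by
    rw [Nat.mul_sub_one, ← pow_succ]; omega
  have hkummer := sub_one_mul_padicValNat_choose_eq_sub_sum_digits (p := p)
    (Nat.add_le_add_left hpow (p ^ i))
  rw [hdiff, digits_sum_pow_add_pow hp3, digits_sum_pow_add_pow hp3, digits_sum_base_pow_mul hp1,
    digits_sum_of_lt hp1 (by omega), Nat.add_sub_cancel_left] at hkummer
  exact (Nat.mul_eq_left (by omega)).mp hkummer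

theorem exists_even_not_dvd_choose_of_two_lt_digits_sum (hp2 : p ≠ 2) {N : ℕ}
    (hN : 2 < (p.digits N).sum) : ∃ m, Even m ∧ 0 < m ∧ m < N ∧ ¬ p ∣ N.choose m := by
  have hodd : Odd p := hp.out.odd_of_ne_two hp2
  have hp3 : 2 < p := lt_of_le_of_ne hp.out.two_le (Ne.symm hp2)
  obtain ⟨a, b, hab, hs⟩ := exists_pow_add_pow_le_of_two_le_digits_sum hp.out.one_lt hN.le
  have hmN : p ^ a + p ^ b < N := by
    refine lt_of_le_of_ne hab fun h => ?_
    rw [h, Nat.sub_self] at hs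
    simp at hs
    omega
  have hkummer := sub_one_mul_padicValNat_choose_eq_sub_sum_digits (p := p) hab
  rw [digits_sum_pow_add_pow hp3, ← hs, Nat.add_comm 2, Nat.sub_self,
    Nat.mul_eq_zero] at hkummer
  refine ⟨p ^ a + p ^ b, (hodd.pow).add_odd hodd.pow, by positivity, hmN, fun h => ?_⟩
  have := one_le_padicValNat_of_dvd (Nat.choose_pos hab).ne' h
  omega

end Kummer

open Classical in
theorem stmt_2 (n p : ℕ) (hn : 1 < n) (hp : p.Prime) (hodd : p ≠ 2) :
    padicValNat p (Finset.gcd (Finset.Ioo 0 n) (fun k => Nat.choose (2 * n) (2 * k))) =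
      if ∃ i j : ℕ, i ≤ j ∧ 2 * n = p ^ i + p ^ j then 1 else 0 := by
  have := Fact.mk hp
  have hp3 : 2 < p := lt_of_le_of_ne hp.two_le (Ne.symm hodd)
  have hpodd : Odd p := hp.odd_of_ne_two hodd
  set g := (Finset.Ioo 0 n).gcd fun k => (2 * n).choose (2 * k)
  have mem_Ioo {k : ℕ} (hk0 : 0 < k) (hkn : k < n) : k ∈ Finset.Ioo 0 n :=
    Finset.mem_Ioo.mpr ⟨hk0, hkn⟩
  have hg : g ≠ 0 := fun h => (Nat.choose_pos (by omega : 2 * 1 ≤ 2 * n)).ne'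
    (Finset.gcd_eq_zero_iff.mp h 1 (mem_Ioo one_pos hn))
  simp only [← Nat.digits_sum_eq_two_iff hp3]
  split_ifs with hN
  · obtain ⟨i, j, hij, hNij⟩ := (Nat.digits_sum_eq_two_iff hp3).mp hN
    obtain ⟨j, rfl⟩ : ∃ j', j = j' + 1 := Nat.exists_eq_succ_of_ne_zero (by
      rintro rfl; rw [Nat.le_zero.mp hij] at hNij; simp at hNij; omega)
    obtain ⟨k, hk⟩ : Even (p ^ i + p ^ j) := hpodd.pow.add_odd hpodd.pow
    have hlt : p ^ i + p ^ j < 2 * n := hNij ▸ by gcongr <;> omega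
    have hk_mem := mem_Ioo (k := k) (by have := pow_pos hp.pos i; omega) (by omega)
    refine le_antisymm ?_ (one_le_padicValNat_of_dvd hg (Finset.dvd_gcd fun l hl => ?_))
    · calc padicValNat p g ≤ padicValNat p ((2 * n).choose (2 * k)) :=
            padicValNat_le_of_dvd (Nat.choose_pos (by omega)).ne' (Finset.gcd_dvd hk_mem)
        _ = 1 := by rw [hNij, two_mul, ← hk, padicValNat_choose_pow_add_pow_succ hodd]
    · obtain ⟨hl0, hln⟩ := Finset.mem_Ioo.mp hl
      exact prime_dvd_choose_of_digits_sum_eq_two hodd hN (even_two_mul l) (by omega) (by omega)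
  · have hN2 : 2 < (p.digits (2 * n)).sum := by
      obtain ⟨e, -, he⟩ := Nat.exists_digits_sum_sub_base_pow hp.one_lt (x := 2 * n) (by omega)
      have := Nat.digits_sum_mod_two hpodd (2 * n)
      omega
    obtain ⟨m, ⟨k, rfl⟩, hm0, hmN, hndvd⟩ :=
      exists_even_not_dvd_choose_of_two_lt_digits_sum hodd hN2
    refine padicValNat.eq_zero_of_not_dvd fun h => hndvd ?_
    rw [← two_mul]
    exact h.trans (Finset.gcd_dvd (mem_Ioo (by omega) (by omega)))
end

section
/- For any integers n > q > 0 and any prime p with p ≡ 1 (mod q), the p-adic valuation of the gcd of the binomial coefficients C(n, qk) taken over all k with 0 < qk < n equals 1 if the sum of the base-p digits of n is at most q, and equals 0 otherwise. -/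
/-!
Write `α(m)` for the base-`p` digit sum of `m`. Legendre's formula gives
`(p - 1) v_p(C(n, m)) = α(m) + α(n - m) - α(n)`, and since `p ≡ 1 (mod q)` we have
`m ≡ α(m) (mod q)`, so a positive multiple `m` of `q` has `α(m) ≥ q`.

If `α(n) ≤ q`, every `C(n, qk)` with `0 < qk < n` is therefore divisible by `p`, and subtracting
from `n` a number `m` with `α(m) = q` that produces exactly one borrow gives a coefficient of
valuation exactly `1`. If `α(n) > q`, lowering the digits of `n` until their sum is `q` gives
an `m` with no borrow at all, hence a coefficient prime to `p`.
-/

open Nat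

namespace Nat

theorem digits_sum_add_mul {p d : ℕ} (hp : 1 < p) (hd : d < p) (x : ℕ) :
    (digits p (d + p * x)).sum = d + (digits p x).sum := by
  rcases eq_or_ne d 0 with rfl | hd0
  · rcases eq_or_ne x 0 with rfl | hx0
    · simp
    · rw [digits_add p hp 0 x hd (Or.inr hx0)]
      simp
  · simp [digits_add p hp d x hd (Or.inl hd0)]

theorem digits_sum_of_lt_s5 {p d : ℕ} (hp : 1 < p) (hd : d < p) : (digits p d).sum = d := by
  simpa using digits_sum_add_mul hp hd 0

theorem digits_sum_pos {p m : ℕ} (hm : m ≠ 0) : 0 < (digits p m).sum :=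
  (Nat.pos_of_ne_zero (getLast_digit_ne_zero p hm)).trans_le
    (List.le_sum_of_mem (List.getLast_mem _))

theorem modEq_digits_sum_of_modEq {p q : ℕ} (h : p ≡ 1 [MOD q]) (m : ℕ) :
    m ≡ (digits p m).sum [MOD q] := by
  simpa [ofDigits_digits, ofDigits_one] using ofDigits_modEq' p 1 q h (digits p m)

theorem lt_of_modEq_one {p q : ℕ} (hp : 1 < p) (h : p ≡ 1 [MOD q]) : q < p := by
  have := Nat.le_of_dvd (by omega) ((Nat.modEq_iff_dvd' hp.le).mp h.symm)
  omega

theorem exists_digits_sum_eq_without_borrow {p : ℕ} (hp : 1 < p) {n t : ℕ}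
    (ht : t ≤ (digits p n).sum) :
    ∃ m ≤ n, (digits p m).sum = t ∧
      (digits p m).sum + (digits p (n - m)).sum = (digits p n).sum := by
  induction n using Nat.strong_induction_on generalizing t with
  | _ n ih =>
  have hn := Nat.mod_add_div n p
  have hd : n % p < p := Nat.mod_lt n (by omega)
  set d := n % p
  set n' := n / p
  have hα : (digits p n).sum = d + (digits p n').sum := by
    rw [← digits_sum_add_mul hp hd, hn]
  by_cases htd : t ≤ d
  · refine ⟨t, by omega, digits_sum_of_lt_s5 hp (by omega), ?_⟩
    have : n - t = (d - t) + p * n' := by omega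
    rw [this, digits_sum_add_mul hp (by omega), digits_sum_of_lt_s5 hp (by omega), hα]
    omega
  · have hn0 : n ≠ 0 := by rintro rfl; simp at ht; omega
    obtain ⟨m', hm'n', hm', hsum⟩ :=
      ih n' (Nat.div_lt_self (Nat.pos_of_ne_zero hn0) hp) (t := t - d) (by omega)
    refine ⟨d + p * m', by nlinarith, by rw [digits_sum_add_mul hp hd]; omega, ?_⟩
    have : n - (d + p * m') = 0 + p * (n' - m') := by rw [Nat.mul_sub]; omega
    rw [this, digits_sum_add_mul hp hd, digits_sum_add_mul hp (by omega), hα]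
    omega

theorem exists_digits_sum_eq_with_one_borrow {p : ℕ} (hp : 1 < p) {n t : ℕ} (hpn : p ≤ n)
    (ht : (digits p n).sum ≤ t) (htp : t < p) :
    ∃ m ≤ n, (digits p m).sum = t ∧
      (digits p m).sum + (digits p (n - m)).sum = (digits p n).sum + (p - 1) := by
  induction n using Nat.strong_induction_on generalizing t with
  | _ n ih =>
  have hn := Nat.mod_add_div n p
  have hd : n % p < p := Nat.mod_lt n (by omega)
  set d := n % p
  set n' := n / p
  have hn'0 : 0 < n' := Nat.div_pos hpn (by omega)
  have hα : (digits p n).sum = d + (digits p n').sum := by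
    rw [← digits_sum_add_mul hp hd, hn]
  by_cases hn'p : n' < p
  · rw [digits_sum_of_lt_s5 hp hn'p] at hα
    refine ⟨t, by omega, digits_sum_of_lt_s5 hp htp, ?_⟩
    have : n - t = (d + p - t) + p * (n' - 1) := by
      have := Nat.le_mul_of_pos_right p hn'0
      rw [Nat.mul_sub_one]; omega
    rw [this, digits_sum_add_mul hp (by omega), digits_sum_of_lt_s5 hp htp,
      digits_sum_of_lt_s5 hp (by omega), hα]
    omega
  · obtain ⟨m', hm'n', hm', hsum⟩ :=
      ih n' (Nat.div_lt_self (by omega) hp) (by omega) (t := t - d) (by omega) (by omega)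
    refine ⟨d + p * m', by nlinarith, by rw [digits_sum_add_mul hp hd]; omega, ?_⟩
    have : n - (d + p * m') = 0 + p * (n' - m') := by rw [Nat.mul_sub]; omega
    rw [this, digits_sum_add_mul hp hd, digits_sum_add_mul hp (by omega), hα]
    omega

variable {p : ℕ} [Fact p.Prime]

theorem padicValNat_choose_eq_of_digits_sum {n m v : ℕ} (hmn : m ≤ n)
    (h : (digits p m).sum + (digits p (n - m)).sum = (digits p n).sum + (p - 1) * v) :
    padicValNat p (choose n m) = v := by
  have hleg := sub_one_mul_padicValNat_choose_eq_sub_sum_digits (p := p) hmn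
  rw [h, add_tsub_cancel_left] at hleg
  exact Nat.eq_of_mul_eq_mul_left (by have := (Fact.out : p.Prime).two_le; omega) hleg

theorem prime_dvd_choose_of_digits_sum_lt {n m : ℕ} (hmn : m ≤ n)
    (h : (digits p n).sum < (digits p m).sum + (digits p (n - m)).sum) : p ∣ choose n m := by
  refine dvd_of_one_le_padicValNat (Nat.one_le_iff_ne_zero.mpr fun hv => ?_)
  have hleg := sub_one_mul_padicValNat_choose_eq_sub_sum_digits (p := p) hmn
  rw [hv, mul_zero] at hleg
  omega

theorem prime_dvd_choose_of_dvd_of_digits_sum_le {q n m : ℕ} (hcong : p ≡ 1 [MOD q])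
    (hs : (digits p n).sum ≤ q) (hm0 : 0 < m) (hmn : m < n) (hqm : q ∣ m) : p ∣ choose n m := by
  have hqm' : q ≤ (digits p m).sum := Nat.le_of_dvd (digits_sum_pos hm0.ne')
    (((modEq_digits_sum_of_modEq hcong m).dvd_iff dvd_rfl).mp hqm)
  have := digits_sum_pos (p := p) (Nat.sub_ne_zero_of_lt hmn)
  exact prime_dvd_choose_of_digits_sum_lt hmn.le (by omega)

end Nat

theorem padicValNat_finset_gcd_eq {ι : Type*} {p v : ℕ} [Fact p.Prime] {s : Finset ι}
    {f : ι → ℕ} (hdvd : ∀ i ∈ s, p ^ v ∣ f i) {i₀ : ι} (hi₀ : i₀ ∈ s) (hf : f i₀ ≠ 0)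
    (hv : padicValNat p (f i₀) = v) : padicValNat p (s.gcd f) = v := by
  have hg : s.gcd f ∣ f i₀ := Finset.gcd_dvd hi₀
  have hg0 : s.gcd f ≠ 0 := fun h => hf (zero_dvd_iff.mp (h ▸ hg))
  apply le_antisymm
  · rw [← hv, ← padicValNat_dvd_iff_le hf]
    exact pow_padicValNat_dvd.trans hg
  · rw [← padicValNat_dvd_iff_le hg0]
    exact Finset.dvd_gcd hdvd

theorem padicValNat_gcd_choose_mul_eq {p n q m v : ℕ} [Fact p.Prime] (hq : 0 < q) (hqm : q ∣ m)
    (hm0 : 0 < m) (hmn : m < n) (hv : padicValNat p (choose n m) = v)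
    (hdvd : ∀ k, 0 < k → q * k < n → p ^ v ∣ choose n (q * k)) :
    padicValNat p (((Finset.range n).filter (fun k => 0 < k ∧ q * k < n)).gcd
      fun k => choose n (q * k)) = v := by
  obtain ⟨k, rfl⟩ := hqm
  refine padicValNat_finset_gcd_eq (fun k hk => ?_) ?_ (choose_pos hmn.le).ne' hv
  · simp only [Finset.mem_filter] at hk
    exact hdvd k hk.2.1 hk.2.2
  · simp only [Finset.mem_filter, Finset.mem_range]
    exact ⟨(Nat.le_mul_of_pos_left k hq).trans_lt hmn, Nat.pos_of_mul_pos_left hm0, hmn⟩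

theorem stmt_5 (n q p : ℕ) (hq : 0 < q) (hn : q < n) (hp : p.Prime)
    (hcong : p % q = 1 % q) :
    padicValNat p (Finset.gcd ((Finset.range n).filter (fun k => 0 < k ∧ q * k < n))
        (fun k => Nat.choose n (q * k))) =
      if (Nat.digits p n).sum ≤ q then 1 else 0 := by
  have := Fact.mk hp
  have hqp : q < p := lt_of_modEq_one hp.one_lt hcong
  have hwitness {m v : ℕ} (hmn : m ≤ n) (hm : (digits p m).sum = q)
      (hnm : 0 < (digits p (n - m)).sum) (hv : padicValNat p (choose n m) = v)
      (hdvd : ∀ k, 0 < k → q * k < n → p ^ v ∣ choose n (q * k)) :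
      padicValNat p (((Finset.range n).filter (fun k => 0 < k ∧ q * k < n)).gcd
        fun k => choose n (q * k)) = v :=
    padicValNat_gcd_choose_mul_eq hq
      (((modEq_digits_sum_of_modEq hcong m).dvd_iff dvd_rfl).mpr (hm ▸ dvd_rfl))
      (Nat.pos_of_ne_zero (by rintro rfl; simp at hm; omega))
      (lt_of_le_of_ne hmn (by rintro rfl; simp at hnm)) hv hdvd
  split_ifs with hs
  · have hpn : p ≤ n := by_contra fun h => by
      rw [digits_sum_of_lt_s5 hp.one_lt (by omega)] at hs; omega
    obtain ⟨m, hmn, hm, hsum⟩ := exists_digits_sum_eq_with_one_borrow hp.one_lt hpn hs hqp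
    have hn0 : 0 < (digits p n).sum := digits_sum_pos (by omega)
    refine hwitness hmn hm (by omega)
      (padicValNat_choose_eq_of_digits_sum hmn (by simpa using hsum)) fun k hk hkn => ?_
    rw [pow_one]
    exact prime_dvd_choose_of_dvd_of_digits_sum_le hcong hs (Nat.mul_pos hq hk) hkn
      (dvd_mul_right q k)
  · obtain ⟨m, hmn, hm, hsum⟩ :=
      exists_digits_sum_eq_without_borrow hp.one_lt (n := n) (t := q) (by omega)
    exact hwitness hmn hm (by omega)
      (padicValNat_choose_eq_of_digits_sum hmn (by simpa using hsum)) fun _ _ _ => by simp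
end

section
/- Let p be a prime with p ≡ 1 (mod q) and n > q with base-p digit sum α_p(n) > q. Then there exists k with 0 < qk < n such that p does not divide C(n, qk); consequently, the p-adic valuation of gcd_{0<qk<n} C(n,qk) equals 0. -/
/-!
Choose `m` whose base-`p` digits are bounded by those of `n` and add up to exactly `q`: such an `m`
exists because `α_p(n) > q`, and `m ≠ n` for the same reason. By Lucas' theorem `p ∤ C(n, m)`, and
since `p ≡ 1 (mod q)` we get `m ≡ α_p(m) = q ≡ 0 (mod q)`.
-/

namespace Nat

theorem digits_sum_eq_mod_add_digits_sum_div_s11 {b : ℕ} (hb : 1 < b) (n : ℕ) :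
    (digits b n).sum = n % b + (digits b (n / b)).sum := by
  rcases n.eq_zero_or_pos with rfl | hn
  · simp
  · rw [digits_def' hb hn, List.sum_cons]

theorem modEq_digits_sum_of_modEq_one {b b' : ℕ} (h : b' ≡ 1 [MOD b]) (n : ℕ) :
    n ≡ (digits b' n).sum [MOD b] := by
  conv_lhs => rw [← ofDigits_digits b' n]
  rw [← ofDigits_one]
  exact ofDigits_modEq' b' 1 b h _

theorem Prime.not_dvd_choose_of_lt {p a b : ℕ} (hp : p.Prime) (ha : a < p) (hb : b ≤ a) :
    ¬ p ∣ choose a b := by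
  intro h
  have : p ∣ a ! := choose_mul_factorial_mul_factorial hb ▸ (h.mul_right _).mul_right _
  exact (hp.dvd_factorial.1 this).not_gt ha

theorem not_dvd_choose_of_not_dvd_choose_mod_of_not_dvd_choose_div {p n m : ℕ} [hp : Fact p.Prime]
    (hmod : ¬ p ∣ choose (n % p) (m % p)) (hdiv : ¬ p ∣ choose (n / p) (m / p)) :
    ¬ p ∣ choose n m := by
  rw [dvd_iff_mod_eq_zero, Choose.choose_modEq_choose_mod_mul_choose_div_nat, ← dvd_iff_mod_eq_zero]
  exact hp.out.prime.not_dvd_mul hmod hdiv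

/-- Lucas' theorem, read digit by digit: take `min r (n % p)` as the last digit and recurse. -/
theorem exists_digits_sum_eq_not_dvd_choose {p : ℕ} [hp : Fact p.Prime] (n : ℕ) {r : ℕ}
    (hr : r ≤ (digits p n).sum) : ∃ m, (digits p m).sum = r ∧ ¬ p ∣ choose n m := by
  induction n using Nat.strong_induction_on generalizing r with
  | _ n ih =>
  have hp1 := hp.out.one_lt
  rcases n.eq_zero_or_pos with rfl | hn
  · exact ⟨0, by simpa [eq_comm] using hr, by simp [hp.out.ne_one]⟩
  rw [digits_sum_eq_mod_add_digits_sum_div_s11 hp1] at hr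
  set s := min r (n % p)
  have hs : s < p := (min_le_right _ _).trans_lt (mod_lt _ (zero_lt_of_lt hp1))
  obtain ⟨m, hm_sum, hm⟩ := ih (n / p) (div_lt_self hn hp1) (r := r - s) (by omega)
  have hmod : (s + p * m) % p = s := by rw [add_mul_mod_self_left, mod_eq_of_lt hs]
  have hdiv : (s + p * m) / p = m := by
    rw [add_mul_div_left _ _ (zero_lt_of_lt hp1), div_eq_of_lt hs, zero_add]
  refine ⟨s + p * m, ?_, ?_⟩
  · rw [digits_sum_eq_mod_add_digits_sum_div_s11 hp1, hmod, hdiv, hm_sum]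
    omega
  · refine not_dvd_choose_of_not_dvd_choose_mod_of_not_dvd_choose_div ?_ (by rwa [hdiv])
    rw [hmod]
    exact hp.out.not_dvd_choose_of_lt (mod_lt _ (zero_lt_of_lt hp1)) (min_le_right _ _)

end Nat

theorem stmt_11_general (n q p : ℕ) (hq : 0 < q) (hp : p.Prime)
    (hcong : p % q = 1 % q) (hα : q < (Nat.digits p n).sum) :
    (∃ k : ℕ, 0 < q * k ∧ q * k < n ∧ ¬ p ∣ Nat.choose n (q * k)) ∧
    padicValNat p (Finset.gcd ((Finset.range n).filter (fun k => 0 < k ∧ q * k < n))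
        (fun k => Nat.choose n (q * k))) = 0 := by
  have := Fact.mk hp
  obtain ⟨m, hm_sum, hm⟩ := Nat.exists_digits_sum_eq_not_dvd_choose n hα.le
  have hmn : m < n := by
    refine lt_of_le_of_ne (le_of_not_gt fun h => hm ?_) ?_
    · rw [Nat.choose_eq_zero_of_lt h]
      exact dvd_zero p
    · rintro rfl
      omega
  obtain ⟨k, rfl⟩ : q ∣ m := Nat.modEq_zero_iff_dvd.1 <|
    (Nat.modEq_digits_sum_of_modEq_one hcong m).trans (hm_sum ▸ Nat.modEq_zero_iff_dvd.2 dvd_rfl)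
  have hk : 0 < k := Nat.pos_of_ne_zero fun hk => by simp [hk] at hm_sum; omega
  have hmem : k ∈ (Finset.range n).filter (fun k => 0 < k ∧ q * k < n) := by
    simp only [Finset.mem_filter, Finset.mem_range]
    exact ⟨(Nat.le_mul_of_pos_left k hq).trans_lt hmn, hk, hmn⟩
  exact ⟨⟨k, mul_pos hq hk, hmn, hm⟩,
    padicValNat.eq_zero_of_not_dvd fun h => hm (h.trans (Finset.gcd_dvd hmem))⟩

theorem stmt_11 (n q p : ℕ) (hq : 0 < q) (hn : q < n) (hp : p.Prime)
    (hcong : p % q = 1 % q) (hα : q < (Nat.digits p n).sum) :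
    (∃ k : ℕ, 0 < q * k ∧ q * k < n ∧ ¬ p ∣ Nat.choose n (q * k)) ∧
    padicValNat p (Finset.gcd ((Finset.range n).filter (fun k => 0 < k ∧ q * k < n))
        (fun k => Nat.choose n (q * k))) = 0 :=
  stmt_11_general n q p hq hp hcong hα
end

section
/- For any integer n > 1 and prime p, if the p-adic valuation of gcd_{0<k<n} C(n,k) is positive, then n is a power of p, and in that case the valuation equals exactly 1. -/
/-!
By Lucas's theorem, writing `n = p ^ a * m` with `p ∤ m` gives
`C(n, p ^ a) ≡ C(m, 1) = m (mod p)`, so `p` can divide every `C(n, k)` with `0 < k < n` only if `m = 1`. Conversely, for `n = p ^ i`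
Kummer's theorem shows that `p` divides every such `C(n, k)` while `C(p ^ i, p ^ (i - 1))` is
divisible by `p` exactly once.
-/

open Finset

namespace Nat

lemma Ioo_zero_eq_Icc_one_sub_one (n : ℕ) : Ioo 0 n = Icc 1 (n - 1) := by
  ext k
  simp only [mem_Ioo, mem_Icc]
  omega

lemma exists_eq_prime_pow_of_dvd_gcd_choose {n p : ℕ} (hn : 1 < n) (hp : p.Prime)
    (h : p ∣ (Ioo 0 n).gcd n.choose) : ∃ i, 0 < i ∧ n = p ^ i := by
  have := Fact.mk hp
  have hpow : n = p ^ multiplicity p n :=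
    Choose.eq_pow_multiplicity_of_choose_modEq_zero_nat (by omega) fun k hk =>
      modEq_zero_iff_dvd.mpr <| h.trans <| Finset.gcd_dvd <| by rwa [Ioo_zero_eq_Icc_one_sub_one]
  refine ⟨multiplicity p n, pos_of_ne_zero fun h0 => ?_, hpow⟩
  rw [h0, pow_zero] at hpow
  omega

lemma padicValNat_gcd_choose_prime_pow {p i : ℕ} (hp : p.Prime) (hi : 0 < i) :
    padicValNat p ((Ioo 0 (p ^ i)).gcd (p ^ i).choose) = 1 := by
  have := Fact.mk hp
  have hpow : IsPrimePow (p ^ i) := hp.isPrimePow.pow hi.ne'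
  have hminFac : (p ^ i).minFac = p := by rw [pow_minFac hi.ne', hp.minFac_eq]
  have hdvd := Choose.minFac_dvd_gcd_choose_of_isPrimePow hpow
  have hsq := Choose.minFac_sq_ndvd_gcd_choose_of_isPrimePow hpow
  rw [hminFac, ← Ioo_zero_eq_Icc_one_sub_one] at hdvd hsq
  have hgcd : (Ioo 0 (p ^ i)).gcd (p ^ i).choose ≠ 0 :=
    gcd_ne_zero_iff.mpr
      ⟨1, mem_Ioo.mpr ⟨one_pos, one_lt_pow hi.ne' hp.one_lt⟩, by simp [hp.ne_zero]⟩
  have hle : 1 ≤ padicValNat p _ := (padicValNat_dvd_iff_le hgcd).mp (by rwa [pow_one])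
  have hlt : ¬ 2 ≤ padicValNat p _ := mt (padicValNat_dvd_iff_le hgcd).mpr hsq
  omega

end Nat

theorem stmt_15 (n p : ℕ) (hn : 1 < n) (hp : p.Prime) :
    (0 < padicValNat p (Finset.gcd (Finset.Ioo 0 n) (fun k => Nat.choose n k)) →
      ∃ i : ℕ, 0 < i ∧ n = p ^ i) ∧
    (∀ i : ℕ, 0 < i → n = p ^ i →
      padicValNat p (Finset.gcd (Finset.Ioo 0 n) (fun k => Nat.choose n k)) = 1) := by
  refine ⟨fun hpos => Nat.exists_eq_prime_pow_of_dvd_gcd_choose hn hp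
    (dvd_of_one_le_padicValNat hpos), ?_⟩
  rintro i hi rfl
  exact Nat.padicValNat_gcd_choose_prime_pow hp hi
end

section
/- For any integer n > 1, at most one prime divides gcd_{0<k<n} C(n,k). -/
/-!
If a prime `p` divides every `C(n, k)` with `0 < k < n`, then `n` is a power of `p`: otherwise
`p ^ a`, the exact power of `p` dividing `n = p ^ a * m`, lies strictly between `0` and `n`, and by
Lucas' theorem `C(p ^ a * m, p ^ a) ≡ C(m, 1) = m` is prime to `p`. Since any prime dividing the
gcd also divides `C(n, 1) = n`, it must be the prime of which `n` is a power.
-/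

open Finset

namespace Nat

theorem Prime.not_dvd_choose_ordProj {p n : ℕ} (hp : p.Prime) (hn : n ≠ 0) :
    ¬p ∣ n.choose (ordProj[p] n) := by
  have := Fact.mk hp
  have hlucas : n.choose (ordProj[p] n) ≡ ordCompl[p] n [MOD p] := by
    simpa [ordProj_mul_ordCompl_eq_self] using
      Choose.choose_pow_mul_pow_mul_modEq_choose_nat (p := p) (k := n.factorization p)
        (a := ordCompl[p] n) (b := 1)
  intro h
  exact not_dvd_ordCompl hp hn
    (modEq_zero_iff_dvd.mp (hlucas.symm.trans (modEq_zero_iff_dvd.mpr h)))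

theorem Prime.ordProj_eq_self_of_forall_dvd_choose {p n : ℕ} (hp : p.Prime) (hn : n ≠ 0)
    (h : ∀ k ∈ Ioo 0 n, p ∣ n.choose k) : ordProj[p] n = n := by
  have hle : ordProj[p] n ≤ n := ordProj_le p hn
  by_contra hne
  exact hp.not_dvd_choose_ordProj hn
    (h _ (mem_Ioo.mpr ⟨ordProj_pos n p, lt_of_le_of_ne hle hne⟩))

end Nat

theorem stmt_16 (n : ℕ) (hn : 1 < n) (p₁ p₂ : ℕ) (hp₁ : p₁.Prime) (hp₂ : p₂.Prime)
    (h₁ : p₁ ∣ Finset.gcd (Finset.Ioo 0 n) (fun k => Nat.choose n k))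
    (h₂ : p₂ ∣ Finset.gcd (Finset.Ioo 0 n) (fun k => Nat.choose n k)) :
    p₁ = p₂ := by
  have hn₀ : n ≠ 0 := by omega
  have hpow : p₂ ^ n.factorization p₂ = n :=
    hp₂.ordProj_eq_self_of_forall_dvd_choose hn₀ fun k hk => h₂.trans (gcd_dvd hk)
  have hdvd : p₁ ∣ n := by
    simpa using h₁.trans (gcd_dvd (mem_Ioo.mpr ⟨one_pos, hn⟩))
  rw [← hpow] at hdvd
  exact (Nat.prime_dvd_prime_iff_eq hp₁ hp₂).mp (hp₁.dvd_of_dvd_pow hdvd)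
end

section
/- For a prime p ≡ 1 (mod q) and integers n > q > 0, the condition α_p(n) ≤ q is equivalent to α_p(n) = s, where s is the unique integer with 0 < s ≤ q and s ≡ n (mod q). -/
theorem stmt_17 (n q p s : ℕ) (hq : 0 < q) (hn : q < n) (hp : p.Prime)
    (hcong : p % q = 1 % q) (hs : 0 < s) (hsq : s ≤ q) (hmod : s % q = n % q) :
    (Nat.digits p n).sum ≤ q ↔ (Nat.digits p n).sum = s := by
  have hn0 : n ≠ 0 := by omega
  -- digit sum is positive
  have hpos : 0 < (Nat.digits p n).sum := by
    rcases Nat.eq_zero_or_pos (Nat.digits p n).sum with h | h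
    · exfalso
      have hlast := Nat.getLast_digit_ne_zero p hn0
      have hmem : (Nat.digits p n).getLast (Nat.digits_ne_nil_iff_ne_zero.mpr hn0) ∈
          Nat.digits p n := List.getLast_mem _
      have := List.sum_eq_zero_iff.mp h _ hmem
      exact hlast this
    · exact h
  -- digit sum ≡ n mod q
  rcases Nat.eq_or_lt_of_le hq with h1 | h1
  · -- q = 1
    have : s = 1 := by omega
    subst this
    omega
  have hmodq : p % q = 1 := by
    rwa [Nat.mod_eq_of_lt h1] at hcong
  have hcongr : n ≡ (Nat.digits p n).sum [MOD q] := Nat.modEq_digits_sum q p hmodq n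
  have hd : (Nat.digits p n).sum % q = s % q := by
    have := hcongr.symm
    unfold Nat.ModEq at this
    omega
  constructor
  · intro hle
    -- both in (0, q], same residue mod q
    have h1' : (Nat.digits p n).sum % q = s % q := hd
    rcases Nat.lt_or_ge s q with hsq' | hsq'
    · rw [Nat.mod_eq_of_lt hsq'] at h1'
      rcases Nat.lt_or_ge (Nat.digits p n).sum q with hlt | hge
      · rw [Nat.mod_eq_of_lt hlt] at h1'; exact h1'
      · have : (Nat.digits p n).sum = q := le_antisymm hle hge
        rw [this, Nat.mod_self] at h1'; omega
    · have hsq'' : s = q := le_antisymm hsq hsq'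
      subst hsq''
      rw [Nat.mod_self] at h1'
      rcases Nat.lt_or_ge (Nat.digits p n).sum s with hlt | hge
      · rw [Nat.mod_eq_of_lt hlt] at h1'; omega
      · omega
  · intro h; omega
end

section
/- For any integer n > 1 and any prime p ≡ 1 (mod q) with q > 0, the p-adic valuation of gcd_{0<k≤n} C(qn+1, qk) equals 1 if α_p(qn+1) = 1 (i.e., qn+1 is a power of p), and equals 0 otherwise. -/
/-!
Write `N = q n + 1`. If `N = p ^ (m + 1)`, every `C(N, j)` with `0 < j < N` is divisible by `p`,
and `C(p ^ (m + 1), q p ^ m)` is divisible by `p` exactly once since `0 < q < p`. Otherwise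
`N = p ^ s M` with `p ∤ M > 1`; then `q ∣ N - p ^ s` because `p ≡ 1 (mod q)`, and by Lucas
`C(N, N - p ^ s) = C(p ^ s M, p ^ s) ≡ M (mod p)` is not divisible by `p`.
-/

namespace Nat

theorem digits_sum_pos_s19 {b n : ℕ} (hn : n ≠ 0) : 0 < (digits b n).sum :=
  Nat.pos_of_ne_zero (getLast_digit_ne_zero b hn) |>.trans_le
    (List.le_sum_of_mem (List.getLast_mem _))

theorem digits_sum_eq_one_iff {b n : ℕ} (hb : 1 < b) :
    (digits b n).sum = 1 ↔ ∃ m, n = b ^ m := by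
  refine ⟨fun h => ?_, ?_⟩
  swap
  · rintro ⟨m, rfl⟩
    rw [← mul_one (b ^ m), digits_base_pow_mul hb one_pos, digits_of_lt b 1 one_ne_zero hb]
    simp
  induction n using Nat.strong_induction_on with
  | _ n ih =>
    rcases n.eq_zero_or_pos with rfl | hn
    · simp at h
    rw [digits_def' hb hn, List.sum_cons] at h
    have hdiv := Nat.mod_add_div n b
    by_cases hmod : n % b = 0
    · obtain ⟨m, hm⟩ := ih (n / b) (Nat.div_lt_self hn hb) (by omega)
      exact ⟨m + 1, by rw [pow_succ', ← hm]; omega⟩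
    · have hquot : n / b = 0 := by
        by_contra hquot
        have := digits_sum_pos_s19 (b := b) hquot
        omega
      rw [hquot, mul_zero] at hdiv
      exact ⟨0, by rw [pow_zero]; omega⟩

theorem choose_pow_mul_pow_modEq {p : ℕ} [Fact p.Prime] (s M : ℕ) :
    (p ^ s * M).choose (p ^ s) ≡ M [MOD p] := by
  simpa using Choose.choose_pow_mul_pow_mul_modEq_choose_nat (p := p) (k := s) (a := M) (b := 1)

theorem padicValNat_choose_pow_succ_mul_pow {p q : ℕ} [hp : Fact p.Prime] (hq : 0 < q)
    (hqp : q < p) (m : ℕ) : padicValNat p ((p ^ (m + 1)).choose (q * p ^ m)) = 1 := by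
  have hle : q * p ^ m ≤ p ^ (m + 1) := by
    rw [pow_succ']
    exact Nat.mul_le_mul_right _ hqp.le
  have hval : padicValNat p (q * p ^ m) = m := by
    rw [padicValNat.mul hq.ne' (pow_ne_zero _ hp.out.ne_zero), padicValNat.prime_pow,
      padicValNat.eq_zero_of_not_dvd (Nat.not_dvd_of_pos_of_lt hq hqp), zero_add]
  have := factorization_choose_prime_pow hp.out hle
    (mul_ne_zero hq.ne' (pow_ne_zero _ hp.out.ne_zero))
  rw [factorization_def _ hp.out, factorization_def _ hp.out, hval] at this
  omega

end Nat

section FinsetGcd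

variable {ι : Type*} {s : Finset ι} {f : ι → ℕ} {p : ℕ} {i : ι}

theorem padicValNat_finset_gcd_eq_zero (hi : i ∈ s) (h : ¬p ∣ f i) :
    padicValNat p (s.gcd f) = 0 :=
  padicValNat.eq_zero_of_not_dvd fun hd => h (hd.trans (Finset.gcd_dvd hi))

theorem padicValNat_finset_gcd_eq_one [Fact p.Prime] (hdvd : ∀ j ∈ s, p ∣ f j) (hi : i ∈ s)
    (h : padicValNat p (f i) = 1) : padicValNat p (s.gcd f) = 1 := by
  have hfi : f i ≠ 0 := by
    rintro h0
    simp [h0] at h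
  have hG : s.gcd f ∣ f i := Finset.gcd_dvd hi
  have hG0 : s.gcd f ≠ 0 := ne_zero_of_dvd_ne_zero hfi hG
  refine le_antisymm ?_ (one_le_padicValNat_of_dvd hG0 (Finset.dvd_gcd hdvd))
  exact h ▸ (padicValNat_dvd_iff_le hfi).mp (pow_padicValNat_dvd.trans hG)

end FinsetGcd

theorem exists_padicValNat_choose_mul_eq_one {p q n m : ℕ} [Fact p.Prime] (hq : 0 < q)
    (hqp : q < p) (hN : q * n + 1 = p ^ (m + 1)) :
    ∃ k ∈ Finset.Ioc 0 n, padicValNat p ((q * n + 1).choose (q * k)) = 1 := by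
  have hpm : 0 < p ^ m := pow_pos (Fact.out : p.Prime).pos m
  refine ⟨p ^ m, Finset.mem_Ioc.mpr ⟨hpm, ?_⟩, ?_⟩
  · have : q * p ^ m < q * n + 1 := by
      rw [hN, pow_succ']
      exact Nat.mul_lt_mul_of_pos_right hqp hpm
    exact Nat.le_of_mul_le_mul_left (by omega) hq
  · rw [hN]
    exact Nat.padicValNat_choose_pow_succ_mul_pow hq hqp m

theorem exists_not_dvd_choose_mul {p q n s M : ℕ} [Fact p.Prime] (hcong : p % q = 1 % q)
    (hM : ¬p ∣ M) (hM1 : M ≠ 1) (hN : q * n + 1 = p ^ s * M) :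
    ∃ k ∈ Finset.Ioc 0 n, ¬p ∣ (q * n + 1).choose (q * k) := by
  have hM2 : 2 ≤ M := by
    rcases M with _ | _ | M
    · exact absurd (dvd_zero p) hM
    · exact absurd rfl hM1
    · omega
  have hps0 : 0 < p ^ s := pow_pos (Fact.out : p.Prime).pos s
  have hps : p ^ s < q * n + 1 := by
    rw [hN]
    exact lt_mul_of_one_lt_right hps0 hM2
  have hpow : p ^ s ≡ q * n + 1 [MOD q] := by
    have hN1 : 1 ≡ q * n + 1 [MOD q] := (Nat.modEq_iff_dvd' (by omega)).mpr (by simp)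
    exact (by simpa using Nat.ModEq.pow s hcong : p ^ s ≡ 1 [MOD q]).trans hN1
  obtain ⟨k, hk⟩ := (Nat.modEq_iff_dvd' hps.le).mp hpow
  have hqk : 0 < q * k := by omega
  refine ⟨k, Finset.mem_Ioc.mpr ⟨Nat.pos_of_mul_pos_left hqk, ?_⟩, ?_⟩
  · exact Nat.le_of_mul_le_mul_left (by omega) (Nat.pos_of_mul_pos_right hqk)
  · rw [← hk, Nat.choose_symm hps.le, hN]
    exact fun h => hM (((Nat.choose_pow_mul_pow_modEq s M).dvd_iff dvd_rfl).mp h)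

theorem stmt_19 (n q p : ℕ) (hn : 1 < n) (hq : 0 < q) (hp : p.Prime)
    (hcong : p % q = 1 % q) :
    padicValNat p (Finset.gcd (Finset.Ioc 0 n) (fun k => Nat.choose (q * n + 1) (q * k))) =
      if (Nat.digits p (q * n + 1)).sum = 1 then 1 else 0 := by
  have := Fact.mk hp
  have hqp : q < p := by
    have := Nat.le_of_dvd (by have := hp.two_le; omega)
      ((Nat.modEq_iff_dvd' hp.one_lt.le).mp hcong.symm)
    omega
  split_ifs with hα
  · obtain ⟨m, hm⟩ := (Nat.digits_sum_eq_one_iff hp.one_lt).mp hα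
    obtain ⟨m, rfl⟩ : ∃ m', m = m' + 1 := Nat.exists_eq_succ_of_ne_zero (by
      rintro rfl
      simp at hm
      omega)
    obtain ⟨k, hk, hv⟩ := exists_padicValNat_choose_mul_eq_one hq hqp hm
    refine padicValNat_finset_gcd_eq_one (fun j hj => ?_) hk hv
    have hj := Finset.mem_Ioc.mp hj
    rw [hm]
    exact hp.dvd_choose_pow (Nat.mul_pos hq hj.1).ne' (by nlinarith)
  · obtain ⟨s, M, hpM, hN⟩ := Nat.exists_eq_pow_mul_and_not_dvd (n := q * n + 1) (by omega) p
      hp.ne_one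
    have hM1 : M ≠ 1 := by
      rintro rfl
      exact hα ((Nat.digits_sum_eq_one_iff hp.one_lt).mpr ⟨s, by simpa using hN⟩)
    obtain ⟨k, hk, hndvd⟩ := exists_not_dvd_choose_mul hcong hpM hM1 hN
    exact padicValNat_finset_gcd_eq_zero hk hndvd
end
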